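/- Gohberg–Semencul identity for the Toeplitz Bezoutian: D_L N_U − N_L D_U = N_U D_L − D_U N_L, where D_L, N_L are the lower triangular Toeplitz matrices with first columns (d_1,...,d_m), (n_1,...,n_m) and D_U, N_U are the upper triangular Toeplitz matrices with first rows (d_{m+1},...,d_2), (n_{m+1},...,n_2). -/

import Mathlib

open Finset in
private lemma icc_reflect (s : ℕ) (g : ℕ → ℝ) (hg : ∀ a, a ≤ s → g (s - a) = - g a)
    (u v : ℕ) (hu : u ≤ s) (hv : v ≤ s) :
    ∑ a ∈ Icc u v, g a = - ∑ b ∈ Icc (s - v) (s - u), g b := by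
  have h1 : ∑ a ∈ Icc u v, g a = ∑ b ∈ Icc (s - v) (s - u), g (s - b) := by
    refine Finset.sum_nbij' (fun a => s - a) (fun b => s - b) ?_ ?_ ?_ ?_ ?_
    · intro a ha; simp only [mem_Icc] at ha ⊢; omega
    · intro b hb; simp only [mem_Icc] at hb ⊢; omega
    · intro a ha; simp only [mem_Icc] at ha; (try dsimp only); omega
    · intro b hb; simp only [mem_Icc] at hb; (try dsimp only); omega
    · intro a ha; simp only [mem_Icc] at ha
      rw [Nat.sub_sub_self (by omega)]
  rw [h1]
  have h2 : ∀ b ∈ Icc (s - v) (s - u), g (s - b) = - g b := by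
    intro b hb
    exact hg b (by simp only [mem_Icc] at hb; omega)
  rw [Finset.sum_congr rfl h2, Finset.sum_neg_distrib]

/-- Gohberg–Semencul identity for the Toeplitz Bezoutian:
`D_L N_U − N_L D_U = N_U D_L − D_U N_L`. -/
theorem gohberg_semencul (m : ℕ) (n d : Fin (m + 1) → ℝ)
    (NL DL NU DU : Matrix (Fin m) (Fin m) ℝ)
    (hNL : ∀ i j : Fin m, NL i j =
      if h : j.val ≤ i.val then n ⟨i.val - j.val, by omega⟩ else 0)
    (hDL : ∀ i j : Fin m, DL i j =
      if h : j.val ≤ i.val then d ⟨i.val - j.val, by omega⟩ else 0)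
    (hNU : ∀ i j : Fin m, NU i j =
      if h : i.val ≤ j.val then n ⟨m + i.val - j.val, by omega⟩ else 0)
    (hDU : ∀ i j : Fin m, DU i j =
      if h : i.val ≤ j.val then d ⟨m + i.val - j.val, by omega⟩ else 0) :
    DL * NU - NL * DU = NU * DL - DU * NL := by
  ext i j
  have hi : i.1 < m := i.2
  have hj : j.1 < m := j.2
  set D' : ℕ → ℝ := fun a => if h : a < m + 1 then d ⟨a, h⟩ else 0 with hD'
  set N' : ℕ → ℝ := fun a => if h : a < m + 1 then n ⟨a, h⟩ else 0 with hN'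
  set g : ℕ → ℝ := fun a =>
    D' a * N' (m + i.1 - j.1 - a) - N' a * D' (m + i.1 - j.1 - a) with hg'
  have hg : ∀ a, a ≤ m + i.1 - j.1 → g (m + i.1 - j.1 - a) = - g a := by
    intro a ha
    simp only [hg', Nat.sub_sub_self ha]
    ring
  -- left-hand side entry
  have hL : (DL * NU - NL * DU) i j = ∑ a ∈ Finset.Icc (i.1 - j.1) i.1, g a := by
    have hterm : ∀ k : Fin m, DL i k * NU k j - NL i k * DU k j =
        (fun k : ℕ => if k ≤ i.1 ∧ k ≤ j.1 then g (i.1 - k) else 0) k.1 := by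
      intro k
      rw [hDL, hNU, hNL, hDU]
      by_cases h1 : k.1 ≤ i.1 <;> by_cases h2 : k.1 ≤ j.1
      · have e0 : m + i.1 - j.1 - (i.1 - k.1) = m + k.1 - j.1 := by omega
        have e1 : i.1 - k.1 < m + 1 := by omega
        have e2 : m + k.1 - j.1 < m + 1 := by omega
        simp only [dif_pos h1, dif_pos h2, if_pos (And.intro h1 h2), hg', e0,
          hD', hN', dif_pos e1, dif_pos e2]
      · simp [h1, h2]
      · simp [h1, h2]
      · simp [h1, h2]
    rw [Matrix.sub_apply, Matrix.mul_apply, Matrix.mul_apply, ← Finset.sum_sub_distrib,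
      Finset.sum_congr rfl (fun k _ => hterm k),
      Fin.sum_univ_eq_sum_range (fun k : ℕ => if k ≤ i.1 ∧ k ≤ j.1 then g (i.1 - k) else 0) m,
      ← Finset.sum_filter]
    refine Finset.sum_nbij' (fun k => i.1 - k) (fun a => i.1 - a) ?_ ?_ ?_ ?_ ?_
    · intro a ha; simp only [Finset.mem_filter, Finset.mem_range, Finset.mem_Icc] at ha ⊢
      omega
    · intro b hb; simp only [Finset.mem_filter, Finset.mem_range, Finset.mem_Icc] at hb ⊢
      omega
    · intro a ha; simp only [Finset.mem_filter, Finset.mem_range] at ha; (try dsimp only); omega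
    · intro b hb; simp only [Finset.mem_Icc] at hb; (try dsimp only); omega
    · intro a _; rfl
  -- right-hand side entry
  have hR : (NU * DL - DU * NL) i j = ∑ a ∈ Finset.Icc (i.1 - j.1) (m - 1 - j.1), g a := by
    have hterm : ∀ k : Fin m, NU i k * DL k j - DU i k * NL k j =
        (fun k : ℕ => if i.1 ≤ k ∧ j.1 ≤ k then g (k - j.1) else 0) k.1 := by
      intro k
      rw [hDL, hNU, hNL, hDU]
      by_cases h1 : i.1 ≤ k.1 <;> by_cases h2 : j.1 ≤ k.1
      · have e0 : m + i.1 - j.1 - (k.1 - j.1) = m + i.1 - k.1 := by omega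
        have e1 : k.1 - j.1 < m + 1 := by omega
        have e2 : m + i.1 - k.1 < m + 1 := by omega
        simp only [dif_pos h1, dif_pos h2, if_pos (And.intro h1 h2), hg', e0,
          hD', hN', dif_pos e1, dif_pos e2]
        ring
      · simp [h1, h2]
      · simp [h1, h2]
      · simp [h1, h2]
    rw [Matrix.sub_apply, Matrix.mul_apply, Matrix.mul_apply, ← Finset.sum_sub_distrib,
      Finset.sum_congr rfl (fun k _ => hterm k),
      Fin.sum_univ_eq_sum_range (fun k : ℕ => if i.1 ≤ k ∧ j.1 ≤ k then g (k - j.1) else 0) m,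
      ← Finset.sum_filter]
    refine Finset.sum_nbij' (fun k => k - j.1) (fun a => a + j.1) ?_ ?_ ?_ ?_ ?_
    · intro a ha; simp only [Finset.mem_filter, Finset.mem_range, Finset.mem_Icc] at ha ⊢
      omega
    · intro b hb; simp only [Finset.mem_filter, Finset.mem_range, Finset.mem_Icc] at hb ⊢
      omega
    · intro a ha; simp only [Finset.mem_filter, Finset.mem_range] at ha; (try dsimp only); omega
    · intro b hb; simp only [Finset.mem_Icc] at hb; (try dsimp only); omega
    · intro a _; rfl
  rw [hL, hR]
  -- reflect the right-hand interval
  have hrefl : ∑ a ∈ Finset.Icc (i.1 - j.1) (m - 1 - j.1), g a =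
      - ∑ a ∈ Finset.Icc (i.1 + 1) (m + i.1 - j.1 - (i.1 - j.1)), g a := by
    have h := icc_reflect (m + i.1 - j.1) g hg (i.1 - j.1) (m - 1 - j.1) (by omega) (by omega)
    have e3 : m + i.1 - j.1 - (m - 1 - j.1) = i.1 + 1 := by omega
    rw [e3] at h
    exact h
  have hsplit : ∑ a ∈ Finset.Icc (i.1 - j.1) i.1, g a
      + ∑ a ∈ Finset.Icc (i.1 + 1) (m + i.1 - j.1 - (i.1 - j.1)), g a
      = ∑ a ∈ Finset.Icc (i.1 - j.1) (m + i.1 - j.1 - (i.1 - j.1)), g a := by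
    rw [← Finset.sum_union]
    · congr 1
      ext a
      simp only [Finset.mem_union, Finset.mem_Icc]
      omega
    · rw [Finset.disjoint_left]
      intro a ha hb
      simp only [Finset.mem_Icc] at ha hb
      omega
  have hzero : ∑ a ∈ Finset.Icc (i.1 - j.1) (m + i.1 - j.1 - (i.1 - j.1)), g a = 0 := by
    have h := icc_reflect (m + i.1 - j.1) g hg (i.1 - j.1)
      (m + i.1 - j.1 - (i.1 - j.1)) (by omega) (by omega)
    have he : m + i.1 - j.1 - (m + i.1 - j.1 - (i.1 - j.1)) = i.1 - j.1 := by omega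
    rw [he] at h
    linarith
  linarith
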